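/- Let O = (N, C, A, M, Y) be as in the τ-identification setting, with M = (M_j)_{j=1}^N, and define η_j, κ_j, κ_{-j}, w^(2), u_j^(2), u_j^(3), u_j^(4) from the true distribution as in the paper. Then the spillover-mediation efficient influence function has mean zero: E[ψ_τ(O)] = τ_C, where ψ_τ(O) = (1/N) Σ_{j=1}^N { (A/π) w^(2)(1,0,1,M,C,N)(Y_j − η_j(1,M,C,N)) + (A/π)(u_j^(2)(1,0,M_j,C,N) − u_j^(4)(1,1,0,C,N)) + ((1−A)/(1−π))(u_j^(3)(1,1,M_{-j},C,N) − u_j^(4)(1,1,0,C,N)) + u_j^(4)(1,1,0,C,N) } and τ_C = E[(1/N) Σ_j u_j^(4)(1,1,0,C,N)]. -/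
import Mathlib


open Finset

open scoped Classical in
noncomputable def Pr {Ω : Type*} [Fintype Ω] (p : Ω → ℝ) (E : Ω → Prop) : ℝ :=
  ∑ ω, if E ω then p ω else 0

noncomputable def EV {Ω : Type*} [Fintype Ω] (p : Ω → ℝ) (X : Ω → ℝ) : ℝ :=
  ∑ ω, p ω * X ω

noncomputable def cPr {Ω : Type*} [Fintype Ω] (p : Ω → ℝ) (E F : Ω → Prop) : ℝ :=
  Pr p (fun ω => E ω ∧ F ω) / Pr p F

open scoped Classical in
noncomputable def cEV {Ω : Type*} [Fintype Ω] (p : Ω → ℝ) (X : Ω → ℝ) (F : Ω → Prop) : ℝ :=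
  (∑ ω, if F ω then p ω * X ω else 0) / Pr p F

open scoped Classical

section AuxCore
variable {Ω : Type*} [Fintype Ω] {p : Ω → ℝ}

lemma Pr_congr {E F : Ω → Prop} (h : ∀ ω, E ω ↔ F ω) : Pr p E = Pr p F :=
  Finset.sum_congr rfl fun ω _ => if_congr (h ω) rfl rfl

lemma Pr_of_empty {E : Ω → Prop} (h : ∀ ω, ¬ E ω) : Pr p E = 0 :=
  Finset.sum_eq_zero fun ω _ => if_neg (h ω)

lemma Pr_nonneg_zero (hp : ∀ ω, 0 ≤ p ω) {E : Ω → Prop} (h : Pr p E = 0) :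
    ∀ ω, E ω → p ω = 0 := by
  intro ω hE
  have h0 : ∀ x ∈ (univ : Finset Ω), 0 ≤ if E x then p x else 0 := by
    intro x _; split <;> simp [hp x]
  have := (Finset.sum_eq_zero_iff_of_nonneg h0).mp h ω (mem_univ ω)
  simpa [hE] using this

lemma mul_cEV (hp : ∀ ω, 0 ≤ p ω) (X : Ω → ℝ) (F : Ω → Prop) [DecidablePred F] :
    Pr p F * cEV p X F = ∑ ω ∈ univ.filter F, p ω * X ω := by
  by_cases h : Pr p F = 0
  · rw [h, zero_mul]
    symm; apply Finset.sum_eq_zero; intro ω hω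
    rw [Pr_nonneg_zero hp h ω (Finset.mem_filter.mp hω).2, zero_mul]
  · rw [cEV, mul_comm, div_mul_cancel₀ _ h, Finset.sum_filter]
    refine Finset.sum_congr rfl fun ω _ => ?_
    by_cases hF : F ω
    · rw [if_pos hF, if_pos hF]
    · rw [if_neg hF, if_neg hF]

lemma mul_cPr (hp : ∀ ω, 0 ≤ p ω) (E F : Ω → Prop) :
    Pr p F * cPr p E F = Pr p (fun ω => E ω ∧ F ω) := by
  by_cases h : Pr p F = 0
  · rw [h, zero_mul]
    symm; apply Finset.sum_eq_zero; intro ω _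
    split
    · rename_i hF; exact Pr_nonneg_zero hp h ω hF.2
    · rfl
  · rw [cPr, mul_comm, div_mul_cancel₀ _ h]

lemma Pr_partition {β : Type*} [Fintype β] (E : Ω → Prop) (v : Ω → β) :
    Pr p E = ∑ b : β, Pr p fun ω => E ω ∧ v ω = b := by
  unfold Pr
  rw [Finset.sum_comm]
  refine Finset.sum_congr rfl fun ω _ => ?_
  by_cases h : E ω
  · simp [h, Finset.sum_ite_eq]
  · simp [h]

lemma Pr_eq_filter (E : Ω → Prop) [DecidablePred E] :
    Pr p E = ∑ ω ∈ univ.filter E, p ω := by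
  rw [Finset.sum_filter]
  refine Finset.sum_congr rfl fun ω _ => ?_
  by_cases hF : E ω
  · rw [if_pos hF, if_pos hF]
  · rw [if_neg hF, if_neg hF]

end AuxCore

section AuxMain
variable {Ω 𝓜 𝓒 : Type*} [Fintype Ω] [Fintype 𝓜] [DecidableEq 𝓜] [Fintype 𝓒]
variable {p : Ω → ℝ}

/-- decomposition of a sum over Ω into fibers of (N, C, A, M-vector) -/
lemma sum_decomp (N : Ω → ℕ) (C : Ω → 𝓒) (A : Ω → Fin 2) (M : Ω → ℕ → 𝓜) (f : Ω → ℝ) :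
    ∑ ω, f ω = ∑ n ∈ univ.image N, ∑ c : 𝓒, ∑ a : Fin 2, ∑ m : Fin n → 𝓜,
      ∑ ω ∈ univ.filter (fun ω => A ω = a ∧ N ω = n ∧ C ω = c ∧
        ∀ l : Fin n, M ω l = m l), f ω := by
  rw [← Finset.sum_fiberwise_of_maps_to
      (g := N) (fun x _ => Finset.mem_image_of_mem N (Finset.mem_univ x)) f]
  refine Finset.sum_congr rfl fun n _ => ?_
  rw [← Finset.sum_fiberwise (univ.filter fun ω => N ω = n)
      (fun ω => (C ω, A ω, fun l : Fin n => M ω l)) f,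
    Fintype.sum_prod_type]
  refine Finset.sum_congr rfl fun c _ => ?_
  rw [Fintype.sum_prod_type]
  refine Finset.sum_congr rfl fun a _ => Finset.sum_congr rfl fun m _ => ?_
  congr 1
  ext ω
  simp only [Finset.mem_filter, Finset.mem_univ, true_and, Prod.mk.injEq, funext_iff]
  tauto

lemma base_partition (N : Ω → ℕ) (C : Ω → 𝓒) (A : Ω → Fin 2) (M : Ω → ℕ → 𝓜)
    (a : Fin 2) (n : ℕ) (c : 𝓒) :
    Pr p (fun ω => A ω = a ∧ N ω = n ∧ C ω = c)
      = ∑ m : Fin n → 𝓜,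
          Pr p (fun ω => A ω = a ∧ N ω = n ∧ C ω = c ∧ ∀ l : Fin n, M ω l = m l) := by
  rw [Pr_partition (fun ω => A ω = a ∧ N ω = n ∧ C ω = c)
    (fun ω => (fun l : Fin n => M ω l))]
  refine Finset.sum_congr rfl fun m _ => Pr_congr fun ω => ?_
  constructor
  · rintro ⟨⟨h1, h2, h3⟩, h4⟩; exact ⟨h1, h2, h3, fun l => congrFun h4 l⟩
  · rintro ⟨h1, h2, h3, h4⟩; exact ⟨⟨h1, h2, h3⟩, funext h4⟩

lemma Mj_partition (N : Ω → ℕ) (C : Ω → 𝓒) (A : Ω → Fin 2) (M : Ω → ℕ → 𝓜)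
    (a : Fin 2) (n : ℕ) (c : 𝓒) (j : Fin n) (mj : 𝓜) :
    Pr p (fun ω => M ω j = mj ∧ (A ω = a ∧ N ω = n ∧ C ω = c))
      = ∑ m : Fin n → 𝓜, if m j = mj then
          Pr p (fun ω => A ω = a ∧ N ω = n ∧ C ω = c ∧ ∀ l : Fin n, M ω l = m l) else 0 := by
  rw [Pr_partition (fun ω => M ω j = mj ∧ (A ω = a ∧ N ω = n ∧ C ω = c))
    (fun ω => (fun l : Fin n => M ω l))]
  refine Finset.sum_congr rfl fun m _ => ?_
  by_cases h : m j = mj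
  · rw [if_pos h]; refine Pr_congr fun ω => ?_
    constructor
    · rintro ⟨⟨_, h1, h2, h3⟩, h4⟩; exact ⟨h1, h2, h3, fun l => congrFun h4 l⟩
    · rintro ⟨h1, h2, h3, h4⟩
      exact ⟨⟨(h4 j).trans h, h1, h2, h3⟩, funext h4⟩
  · rw [if_neg h]; refine Pr_of_empty fun ω => ?_
    rintro ⟨⟨hj, _⟩, h4⟩
    exact h (((congrFun h4 j).symm).trans hj)

lemma Mmj_partition (N : Ω → ℕ) (C : Ω → 𝓒) (A : Ω → Fin 2) (M : Ω → ℕ → 𝓜)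
    (a : Fin 2) (n : ℕ) (c : 𝓒) (j : Fin n) (m' : Fin n → 𝓜) :
    Pr p (fun ω => (∀ l : Fin n, l ≠ j → M ω l = m' l) ∧ (A ω = a ∧ N ω = n ∧ C ω = c))
      = ∑ m : Fin n → 𝓜, if (∀ l : Fin n, l ≠ j → m l = m' l) then
          Pr p (fun ω => A ω = a ∧ N ω = n ∧ C ω = c ∧ ∀ l : Fin n, M ω l = m l) else 0 := by
  rw [Pr_partition (fun ω => (∀ l : Fin n, l ≠ j → M ω l = m' l) ∧
      (A ω = a ∧ N ω = n ∧ C ω = c)) (fun ω => (fun l : Fin n => M ω l))]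
  refine Finset.sum_congr rfl fun m _ => ?_
  by_cases h : ∀ l : Fin n, l ≠ j → m l = m' l
  · rw [if_pos h]; refine Pr_congr fun ω => ?_
    constructor
    · rintro ⟨⟨_, h1, h2, h3⟩, h4⟩; exact ⟨h1, h2, h3, fun l => congrFun h4 l⟩
    · rintro ⟨h1, h2, h3, h4⟩
      refine ⟨⟨fun l hl => (h4 l).trans (h l hl), h1, h2, h3⟩, funext h4⟩
  · rw [if_neg h]; refine Pr_of_empty fun ω => ?_
    rintro ⟨⟨hagree, _⟩, h4⟩
    exact h fun l hl => ((congrFun h4 l).symm).trans (hagree l hl)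

end AuxMain


lemma swap_sum {ι κ : Type*} [Fintype ι] [Fintype κ] (x : ι → ℝ) (r : ℝ) (F : κ → ι → ℝ) :
    ∑ m : ι, x m * (r * ∑ j : κ, F j m) = r * ∑ j : κ, ∑ m : ι, x m * F j m := by
  calc ∑ m : ι, x m * (r * ∑ j : κ, F j m)
      = ∑ m : ι, ∑ j : κ, r * (x m * F j m) := by
        refine Finset.sum_congr rfl fun m _ => ?_
        rw [Finset.mul_sum, Finset.mul_sum]
        exact Finset.sum_congr rfl fun j _ => by ring
    _ = ∑ j : κ, ∑ m : ι, r * (x m * F j m) := Finset.sum_comm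
    _ = r * ∑ j : κ, ∑ m : ι, x m * F j m := by
        rw [Finset.mul_sum]
        exact Finset.sum_congr rfl fun j _ => (Finset.mul_sum _ _ _).symm


lemma fiber_kill {Ω : Type*} [Fintype Ω] (p : Ω → ℝ) (S : Finset Ω) {κ : Type*} [Fintype κ]
    (r : ℝ) (w e K : κ → ℝ) (Yf : κ → Ω → ℝ)
    (hY : ∀ j, w j * (∑ ω ∈ S, p ω * Yf j ω) = w j * (e j * ∑ ω ∈ S, p ω)) :
    ∑ ω ∈ S, p ω * (r * ∑ j : κ, (w j * (Yf j ω - e j) + K j))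
      = (∑ ω ∈ S, p ω) * (r * ∑ j : κ, K j) := by
  calc ∑ ω ∈ S, p ω * (r * ∑ j : κ, (w j * (Yf j ω - e j) + K j))
      = ∑ ω ∈ S, ∑ j : κ, ((r * w j) * (p ω * Yf j ω) - (r * (w j * e j)) * p ω +
          (r * K j) * p ω) := by
        refine Finset.sum_congr rfl fun ω _ => ?_
        rw [Finset.mul_sum, Finset.mul_sum]
        exact Finset.sum_congr rfl fun j _ => by ring
    _ = ∑ j : κ, ∑ ω ∈ S, ((r * w j) * (p ω * Yf j ω) - (r * (w j * e j)) * p ω +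
          (r * K j) * p ω) := Finset.sum_comm
    _ = (∑ ω ∈ S, p ω) * (r * ∑ j : κ, K j) := by
        rw [Finset.mul_sum, Finset.mul_sum]
        refine Finset.sum_congr rfl fun j _ => ?_
        rw [Finset.sum_add_distrib, Finset.sum_sub_distrib, ← Finset.mul_sum,
          ← Finset.mul_sum, ← Finset.mul_sum, mul_assoc, hY j]
        ring

section JLemmas
variable {Ω 𝓜 𝓒 : Type*} [Fintype Ω] [Fintype 𝓜] [DecidableEq 𝓜] [Fintype 𝓒]

lemma J1 (p : Ω → ℝ) (hp : ∀ ω, 0 ≤ p ω)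
    (N : Ω → ℕ) (C : Ω → 𝓒) (A : Ω → Fin 2) (M : Ω → ℕ → 𝓜)
    (η : (n : ℕ) → Fin n → Fin 2 → (Fin n → 𝓜) → 𝓒 → ℝ)
    (κj : (n : ℕ) → Fin n → Fin 2 → 𝓜 → 𝓒 → ℝ)
    (hκj : ∀ n j a mj c, κj n j a mj c =
      cPr p (fun ω => M ω j = mj) (fun ω => A ω = a ∧ N ω = n ∧ C ω = c))
    (κmj : (n : ℕ) → Fin n → Fin 2 → (Fin n → 𝓜) → 𝓒 → ℝ)
    (u2 : (n : ℕ) → Fin n → Fin 2 → Fin 2 → 𝓜 → 𝓒 → ℝ)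
    (hu2 : ∀ n j a astar mj c, u2 n j a astar mj c =
      ∑ m ∈ Finset.univ.filter (fun m : Fin n → 𝓜 => m j = mj),
        η n j a m c * κmj n j astar m c)
    (u4 : (n : ℕ) → Fin n → Fin 2 → Fin 2 → Fin 2 → 𝓒 → ℝ)
    (hu4 : ∀ n j a astar a' c, u4 n j a astar a' c =
      ∑ m : Fin n → 𝓜, η n j a m c * κj n j astar (m j) c * κmj n j a' m c)
    (n : ℕ) (c : 𝓒) (j : Fin n) :
    ∑ m : Fin n → 𝓜,
        Pr p (fun ω => A ω = 1 ∧ N ω = n ∧ C ω = c ∧ ∀ l : Fin n, M ω l = m l) *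
          u2 n j 1 0 (m j) c
      = Pr p (fun ω => A ω = 1 ∧ N ω = n ∧ C ω = c) * u4 n j 1 1 0 c := by
  have hκjG : ∀ mj : 𝓜,
      κj n j 1 mj c * Pr p (fun ω => A ω = 1 ∧ N ω = n ∧ C ω = c)
        = ∑ m : Fin n → 𝓜, if m j = mj then
            Pr p (fun ω => A ω = 1 ∧ N ω = n ∧ C ω = c ∧ ∀ l : Fin n, M ω l = m l)
          else 0 := by
    intro mj
    rw [hκj n j 1 mj c, mul_comm, mul_cPr hp, Mj_partition N C A M 1 n c j mj]
  calc
    ∑ m : Fin n → 𝓜,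
        Pr p (fun ω => A ω = 1 ∧ N ω = n ∧ C ω = c ∧ ∀ l : Fin n, M ω l = m l) *
          u2 n j 1 0 (m j) c
      = ∑ m : Fin n → 𝓜, ∑ m' : Fin n → 𝓜,
          (if m' j = m j then
            Pr p (fun ω => A ω = 1 ∧ N ω = n ∧ C ω = c ∧ ∀ l : Fin n, M ω l = m l) *
              (η n j 1 m' c * κmj n j 0 m' c)
          else 0) := by
        refine Finset.sum_congr rfl fun m _ => ?_
        rw [hu2 n j 1 0 (m j) c, Finset.sum_filter, Finset.mul_sum]
        exact Finset.sum_congr rfl fun m' _ => by rw [mul_ite, mul_zero]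
    _ = ∑ m' : Fin n → 𝓜,
          (∑ m : Fin n → 𝓜, if m j = m' j then
            Pr p (fun ω => A ω = 1 ∧ N ω = n ∧ C ω = c ∧ ∀ l : Fin n, M ω l = m l)
          else 0) * (η n j 1 m' c * κmj n j 0 m' c) := by
        rw [Finset.sum_comm]
        refine Finset.sum_congr rfl fun m' _ => ?_
        rw [Finset.sum_mul]
        refine Finset.sum_congr rfl fun m _ => ?_
        by_cases h : m j = m' j
        · rw [if_pos h, if_pos h.symm]
        · rw [if_neg h, if_neg (fun hh => h hh.symm), zero_mul]
    _ = ∑ m' : Fin n → 𝓜,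
          (κj n j 1 (m' j) c * Pr p (fun ω => A ω = 1 ∧ N ω = n ∧ C ω = c)) *
            (η n j 1 m' c * κmj n j 0 m' c) := by
        refine Finset.sum_congr rfl fun m' _ => ?_
        rw [← hκjG (m' j)]
    _ = Pr p (fun ω => A ω = 1 ∧ N ω = n ∧ C ω = c) * u4 n j 1 1 0 c := by
        rw [hu4 n j 1 1 0 c, Finset.mul_sum]
        exact Finset.sum_congr rfl fun m' _ => by ring

lemma J2 (p : Ω → ℝ) (hp : ∀ ω, 0 ≤ p ω)
    (N : Ω → ℕ) (C : Ω → 𝓒) (A : Ω → Fin 2) (M : Ω → ℕ → 𝓜)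
    (η : (n : ℕ) → Fin n → Fin 2 → (Fin n → 𝓜) → 𝓒 → ℝ)
    (κj : (n : ℕ) → Fin n → Fin 2 → 𝓜 → 𝓒 → ℝ)
    (κmj : (n : ℕ) → Fin n → Fin 2 → (Fin n → 𝓜) → 𝓒 → ℝ)
    (hκmj : ∀ n j a m c, κmj n j a m c =
      cPr p (fun ω => ∀ l : Fin n, l ≠ j → M ω l = m l)
        (fun ω => A ω = a ∧ N ω = n ∧ C ω = c))
    (u3 : (n : ℕ) → Fin n → Fin 2 → Fin 2 → (Fin n → 𝓜) → 𝓒 → ℝ)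
    (hu3 : ∀ n j a astar m c, u3 n j a astar m c =
      ∑ mj : 𝓜, η n j a (Function.update m j mj) c * κj n j astar mj c)
    (u4 : (n : ℕ) → Fin n → Fin 2 → Fin 2 → Fin 2 → 𝓒 → ℝ)
    (hu4 : ∀ n j a astar a' c, u4 n j a astar a' c =
      ∑ m : Fin n → 𝓜, η n j a m c * κj n j astar (m j) c * κmj n j a' m c)
    (n : ℕ) (c : 𝓒) (j : Fin n) :
    ∑ m : Fin n → 𝓜,
        Pr p (fun ω => A ω = 0 ∧ N ω = n ∧ C ω = c ∧ ∀ l : Fin n, M ω l = m l) *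
          u3 n j 1 1 m c
      = Pr p (fun ω => A ω = 0 ∧ N ω = n ∧ C ω = c) * u4 n j 1 1 0 c := by
  have hκmjG : ∀ m' : Fin n → 𝓜,
      κmj n j 0 m' c * Pr p (fun ω => A ω = 0 ∧ N ω = n ∧ C ω = c)
        = ∑ m : Fin n → 𝓜, if (∀ l : Fin n, l ≠ j → m l = m' l) then
            Pr p (fun ω => A ω = 0 ∧ N ω = n ∧ C ω = c ∧ ∀ l : Fin n, M ω l = m l)
          else 0 := by
    intro m'
    rw [hκmj n j 0 m' c, mul_comm, mul_cPr hp, Mmj_partition N C A M 0 n c j m']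
  calc
    ∑ m : Fin n → 𝓜,
        Pr p (fun ω => A ω = 0 ∧ N ω = n ∧ C ω = c ∧ ∀ l : Fin n, M ω l = m l) *
          u3 n j 1 1 m c
      = ∑ m : Fin n → 𝓜, ∑ mj : 𝓜,
          Pr p (fun ω => A ω = 0 ∧ N ω = n ∧ C ω = c ∧ ∀ l : Fin n, M ω l = m l) *
            (η n j 1 (Function.update m j mj) c * κj n j 1 mj c) := by
        refine Finset.sum_congr rfl fun m _ => ?_
        rw [hu3 n j 1 1 m c, Finset.mul_sum]
    _ = ∑ mj : 𝓜, ∑ m : Fin n → 𝓜,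
          Pr p (fun ω => A ω = 0 ∧ N ω = n ∧ C ω = c ∧ ∀ l : Fin n, M ω l = m l) *
            (η n j 1 (Function.update m j mj) c * κj n j 1 mj c) := Finset.sum_comm
    _ = ∑ mj : 𝓜, ∑ m : Fin n → 𝓜, ∑ m' : Fin n → 𝓜,
          (if m' = Function.update m j mj then
            Pr p (fun ω => A ω = 0 ∧ N ω = n ∧ C ω = c ∧ ∀ l : Fin n, M ω l = m l) *
              (η n j 1 m' c * κj n j 1 mj c)
          else 0) := by
        refine Finset.sum_congr rfl fun mj _ => Finset.sum_congr rfl fun m _ => ?_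
        exact (Fintype.sum_ite_eq' (Function.update m j mj)
          (fun m' => Pr p (fun ω => A ω = 0 ∧ N ω = n ∧ C ω = c ∧ ∀ l : Fin n, M ω l = m l) *
            (η n j 1 m' c * κj n j 1 mj c))).symm
    _ = ∑ mj : 𝓜, ∑ m' : Fin n → 𝓜,
          (if m' j = mj then
            (∑ m : Fin n → 𝓜, if (∀ l : Fin n, l ≠ j → m l = m' l) then
              Pr p (fun ω => A ω = 0 ∧ N ω = n ∧ C ω = c ∧ ∀ l : Fin n, M ω l = m l)
            else 0) * (η n j 1 m' c * κj n j 1 mj c)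
          else 0) := by
        refine Finset.sum_congr rfl fun mj _ => ?_
        rw [Finset.sum_comm]
        refine Finset.sum_congr rfl fun m' _ => ?_
        by_cases h1 : m' j = mj
        · rw [if_pos h1, Finset.sum_mul]
          refine Finset.sum_congr rfl fun m _ => ?_
          have hiff : (m' = Function.update m j mj) ↔ (∀ l : Fin n, l ≠ j → m l = m' l) := by
            rw [Function.eq_update_iff]
            constructor
            · rintro ⟨_, h2⟩ l hl; exact (h2 l hl).symm
            · intro h2; exact ⟨h1, fun l hl => (h2 l hl).symm⟩
          rw [if_congr hiff rfl rfl, ite_mul, zero_mul]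
        · rw [if_neg h1]
          refine Finset.sum_eq_zero fun m _ => ?_
          rw [if_neg]
          intro hcontra
          apply h1
          rw [hcontra, Function.update_self]
    _ = ∑ mj : 𝓜, ∑ m' : Fin n → 𝓜,
          (if m' j = mj then
            (κmj n j 0 m' c * Pr p (fun ω => A ω = 0 ∧ N ω = n ∧ C ω = c)) *
              (η n j 1 m' c * κj n j 1 mj c)
          else 0) := by
        refine Finset.sum_congr rfl fun mj _ => Finset.sum_congr rfl fun m' _ => ?_
        rw [← hκmjG m']
    _ = ∑ m' : Fin n → 𝓜,
          (κmj n j 0 m' c * Pr p (fun ω => A ω = 0 ∧ N ω = n ∧ C ω = c)) *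
            (η n j 1 m' c * κj n j 1 (m' j) c) := by
        rw [Finset.sum_comm]
        refine Finset.sum_congr rfl fun m' _ => ?_
        exact Fintype.sum_ite_eq (m' j)
          (fun mj => (κmj n j 0 m' c * Pr p (fun ω => A ω = 0 ∧ N ω = n ∧ C ω = c)) *
            (η n j 1 m' c * κj n j 1 mj c))
    _ = Pr p (fun ω => A ω = 0 ∧ N ω = n ∧ C ω = c) * u4 n j 1 1 0 c := by
        rw [hu4 n j 1 1 0 c, Finset.mul_sum]
        exact Finset.sum_congr rfl fun m' _ => by ring

end JLemmas

/-- The spillover-mediation efficient influence function, evaluated at the true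
nuisance functions, has mean zero: E[ψ_τ(O)] = τ_C. -/
theorem eif_tau_mean_zero
    {Ω 𝓜 𝓒 : Type*} [Fintype Ω] [Fintype 𝓜] [DecidableEq 𝓜] [Fintype 𝓒]
    (p : Ω → ℝ) (hp : ∀ ω, 0 ≤ p ω) (hp1 : ∑ ω, p ω = 1)
    (N : Ω → ℕ) (hN : ∀ ω, 0 < N ω)
    (C : Ω → 𝓒) (A : Ω → Fin 2) (M : Ω → ℕ → 𝓜) (Y : Ω → ℕ → ℝ)
    (π : ℝ) (hπ : 0 < π ∧ π < 1) (hA : Pr p (fun ω => A ω = 1) = π)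
    (hindep : ∀ (a : Fin 2) (n : ℕ) (c : 𝓒),
      Pr p (fun ω => A ω = a ∧ N ω = n ∧ C ω = c) =
        Pr p (fun ω => A ω = a) * Pr p (fun ω => N ω = n ∧ C ω = c))
    (hpos : ∀ (a : Fin 2) (n : ℕ) (c : 𝓒) (m : Fin n → 𝓜),
      0 < Pr p (fun ω => N ω = n ∧ C ω = c) →
      0 < Pr p (fun ω => A ω = a ∧ N ω = n ∧ C ω = c ∧ ∀ l : Fin n, M ω l = m l))
    (η : (n : ℕ) → Fin n → Fin 2 → (Fin n → 𝓜) → 𝓒 → ℝ)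
    (hη : ∀ n j a m c, η n j a m c =
      cEV p (fun ω => Y ω j)
        (fun ω => A ω = a ∧ N ω = n ∧ C ω = c ∧ ∀ l : Fin n, M ω l = m l))
    (κ : (n : ℕ) → Fin 2 → (Fin n → 𝓜) → 𝓒 → ℝ)
    (hκ : ∀ n a m c, κ n a m c =
      cPr p (fun ω => ∀ l : Fin n, M ω l = m l)
        (fun ω => A ω = a ∧ N ω = n ∧ C ω = c))
    (κj : (n : ℕ) → Fin n → Fin 2 → 𝓜 → 𝓒 → ℝ)
    (hκj : ∀ n j a mj c, κj n j a mj c =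
      cPr p (fun ω => M ω j = mj) (fun ω => A ω = a ∧ N ω = n ∧ C ω = c))
    (κmj : (n : ℕ) → Fin n → Fin 2 → (Fin n → 𝓜) → 𝓒 → ℝ)
    (hκmj : ∀ n j a m c, κmj n j a m c =
      cPr p (fun ω => ∀ l : Fin n, l ≠ j → M ω l = m l)
        (fun ω => A ω = a ∧ N ω = n ∧ C ω = c))
    (w2 : (n : ℕ) → Fin n → Fin 2 → Fin 2 → Fin 2 → (Fin n → 𝓜) → 𝓒 → ℝ)
    (hw2 : ∀ n j a astar a' m c, w2 n j a astar a' m c =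
      κj n j a (m j) c * κmj n j astar m c / κ n a' m c)
    (u2 : (n : ℕ) → Fin n → Fin 2 → Fin 2 → 𝓜 → 𝓒 → ℝ)
    (hu2 : ∀ n j a astar mj c, u2 n j a astar mj c =
      ∑ m ∈ Finset.univ.filter (fun m : Fin n → 𝓜 => m j = mj),
        η n j a m c * κmj n j astar m c)
    (u3 : (n : ℕ) → Fin n → Fin 2 → Fin 2 → (Fin n → 𝓜) → 𝓒 → ℝ)
    (hu3 : ∀ n j a astar m c, u3 n j a astar m c =
      ∑ mj : 𝓜, η n j a (Function.update m j mj) c * κj n j astar mj c)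
    (u4 : (n : ℕ) → Fin n → Fin 2 → Fin 2 → Fin 2 → 𝓒 → ℝ)
    (hu4 : ∀ n j a astar a' c, u4 n j a astar a' c =
      ∑ m : Fin n → 𝓜, η n j a m c * κj n j astar (m j) c * κmj n j a' m c)
    (τC : ℝ)
    (hτ : τC = EV p (fun ω => (1 / (N ω : ℝ)) *
      ∑ j : Fin (N ω), u4 (N ω) j 1 1 0 (C ω))) :
    EV p (fun ω => (1 / (N ω : ℝ)) * ∑ j : Fin (N ω),
      ((if A ω = 1 then (1:ℝ) else 0) / π *
          w2 (N ω) j 1 0 1 (fun l => M ω l) (C ω) *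
          (Y ω j - η (N ω) j 1 (fun l => M ω l) (C ω)) +
        (if A ω = 1 then (1:ℝ) else 0) / π *
          (u2 (N ω) j 1 0 (M ω j) (C ω) - u4 (N ω) j 1 1 0 (C ω)) +
        (if A ω = 0 then (1:ℝ) else 0) / (1 - π) *
          (u3 (N ω) j 1 1 (fun l => M ω l) (C ω) - u4 (N ω) j 1 1 0 (C ω)) +
        u4 (N ω) j 1 1 0 (C ω))) = τC := by
  rw [hτ]
  simp only [EV]
  rw [sum_decomp N C A M, sum_decomp N C A M]
  refine Finset.sum_congr rfl fun n _ => Finset.sum_congr rfl fun c _ =>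
    Finset.sum_congr rfl fun a _ => ?_
  -- the base (u4) side, per fiber
  have keyR : ∀ m : Fin n → 𝓜,
      (∑ ω ∈ univ.filter (fun ω => A ω = a ∧ N ω = n ∧ C ω = c ∧ ∀ l : Fin n, M ω l = m l),
        p ω * ((1 / (N ω : ℝ)) * ∑ j : Fin (N ω), u4 (N ω) j 1 1 0 (C ω)))
      = Pr p (fun ω => A ω = a ∧ N ω = n ∧ C ω = c ∧ ∀ l : Fin n, M ω l = m l)
          * ((1 / (n : ℝ)) * ∑ j : Fin n, u4 n j 1 1 0 c) := by
    intro m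
    rw [Pr_eq_filter, Finset.sum_mul]
    refine Finset.sum_congr rfl fun ω hω => ?_
    obtain ⟨ha, hn, hc, hm⟩ := (Finset.mem_filter.mp hω).2
    subst hn; subst hc
    rfl
  -- the EIF side, per fiber
  have keyL : ∀ m : Fin n → 𝓜,
      (∑ ω ∈ univ.filter (fun ω => A ω = a ∧ N ω = n ∧ C ω = c ∧ ∀ l : Fin n, M ω l = m l),
        p ω * ((1 / (N ω : ℝ)) * ∑ j : Fin (N ω),
          ((if A ω = 1 then (1:ℝ) else 0) / π *
              w2 (N ω) j 1 0 1 (fun l => M ω l) (C ω) *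
              (Y ω j - η (N ω) j 1 (fun l => M ω l) (C ω)) +
            (if A ω = 1 then (1:ℝ) else 0) / π *
              (u2 (N ω) j 1 0 (M ω j) (C ω) - u4 (N ω) j 1 1 0 (C ω)) +
            (if A ω = 0 then (1:ℝ) else 0) / (1 - π) *
              (u3 (N ω) j 1 1 (fun l => M ω l) (C ω) - u4 (N ω) j 1 1 0 (C ω)) +
            u4 (N ω) j 1 1 0 (C ω))))
      = Pr p (fun ω => A ω = a ∧ N ω = n ∧ C ω = c ∧ ∀ l : Fin n, M ω l = m l)
          * ((1 / (n : ℝ)) * ∑ j : Fin n,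
              ((if a = 1 then (1:ℝ) else 0) / π * (u2 n j 1 0 (m j) c - u4 n j 1 1 0 c) +
               (if a = 0 then (1:ℝ) else 0) / (1 - π) * (u3 n j 1 1 m c - u4 n j 1 1 0 c) +
               u4 n j 1 1 0 c)) := by
    intro m
    have hbody : ∀ ω ∈ univ.filter
        (fun ω => A ω = a ∧ N ω = n ∧ C ω = c ∧ ∀ l : Fin n, M ω l = m l),
        p ω * ((1 / (N ω : ℝ)) * ∑ j : Fin (N ω),
          ((if A ω = 1 then (1:ℝ) else 0) / π *
              w2 (N ω) j 1 0 1 (fun l => M ω l) (C ω) *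
              (Y ω j - η (N ω) j 1 (fun l => M ω l) (C ω)) +
            (if A ω = 1 then (1:ℝ) else 0) / π *
              (u2 (N ω) j 1 0 (M ω j) (C ω) - u4 (N ω) j 1 1 0 (C ω)) +
            (if A ω = 0 then (1:ℝ) else 0) / (1 - π) *
              (u3 (N ω) j 1 1 (fun l => M ω l) (C ω) - u4 (N ω) j 1 1 0 (C ω)) +
            u4 (N ω) j 1 1 0 (C ω)))
        = p ω * ((1 / (n : ℝ)) * ∑ j : Fin n,
            ((if a = 1 then (1:ℝ) else 0) / π * w2 n j 1 0 1 m c *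
                (Y ω j - η n j 1 m c) +
              ((if a = 1 then (1:ℝ) else 0) / π * (u2 n j 1 0 (m j) c - u4 n j 1 1 0 c) +
               (if a = 0 then (1:ℝ) else 0) / (1 - π) * (u3 n j 1 1 m c - u4 n j 1 1 0 c) +
               u4 n j 1 1 0 c))) := by
      intro ω hω
      obtain ⟨ha, hn, hc, hm⟩ := (Finset.mem_filter.mp hω).2
      subst hn; subst hc; subst ha
      congr 1
      congr 1
      refine Finset.sum_congr rfl fun j _ => ?_
      rw [funext hm, hm j]
      ring
    refine (Finset.sum_congr rfl hbody).trans ?_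
    rw [Pr_eq_filter]
    refine fiber_kill p _ (1 / (n : ℝ))
      (fun j => (if a = 1 then (1:ℝ) else 0) / π * w2 n j 1 0 1 m c)
      (fun j => η n j 1 m c)
      (fun j => (if a = 1 then (1:ℝ) else 0) / π * (u2 n j 1 0 (m j) c - u4 n j 1 1 0 c) +
               (if a = 0 then (1:ℝ) else 0) / (1 - π) * (u3 n j 1 1 m c - u4 n j 1 1 0 c) +
               u4 n j 1 1 0 c)
      (fun j ω => Y ω j) ?_
    intro j
    by_cases ha1 : a = 1
    · subst ha1
      congr 1
      calc ∑ ω ∈ univ.filter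
            (fun ω => A ω = 1 ∧ N ω = n ∧ C ω = c ∧ ∀ l : Fin n, M ω l = m l),
            p ω * Y ω (j : ℕ)
          = Pr p (fun ω => A ω = 1 ∧ N ω = n ∧ C ω = c ∧ ∀ l : Fin n, M ω l = m l) *
              cEV p (fun ω => Y ω (j : ℕ))
                (fun ω => A ω = 1 ∧ N ω = n ∧ C ω = c ∧ ∀ l : Fin n, M ω l = m l) :=
            (mul_cEV hp _ _).symm
        _ = η n j 1 m c * ∑ ω ∈ univ.filter
              (fun ω => A ω = 1 ∧ N ω = n ∧ C ω = c ∧ ∀ l : Fin n, M ω l = m l), p ω := by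
            rw [hη n j 1 m c, ← Pr_eq_filter, mul_comm]
    · rw [if_neg ha1]
      ring
  refine (Finset.sum_congr rfl fun m _ => keyL m).trans
    (Eq.trans ?_ (Finset.sum_congr rfl fun m _ => keyR m).symm)
  refine (swap_sum _ _ _).trans (Eq.trans ?_ (swap_sum _ _ _).symm)
  congr 1
  refine Finset.sum_congr rfl fun j _ => ?_
  by_cases ha1 : a = 1
  · subst ha1
    have h2 : (∑ m : Fin n → 𝓜,
        Pr p (fun ω => A ω = 1 ∧ N ω = n ∧ C ω = c ∧ ∀ l : Fin n, M ω l = m l) *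
          u2 n j 1 0 (m j) c)
        = ∑ m : Fin n → 𝓜,
            Pr p (fun ω => A ω = 1 ∧ N ω = n ∧ C ω = c ∧ ∀ l : Fin n, M ω l = m l) *
              u4 n j 1 1 0 c := by
      rw [J1 p hp N C A M η κj hκj κmj u2 hu2 u4 hu4 n c j,
        base_partition N C A M 1 n c, Finset.sum_mul]
    calc ∑ m : Fin n → 𝓜,
          Pr p (fun ω => A ω = 1 ∧ N ω = n ∧ C ω = c ∧ ∀ l : Fin n, M ω l = m l) *
            ((if (1 : Fin 2) = 1 then (1:ℝ) else 0) / π *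
                (u2 n j 1 0 (m j) c - u4 n j 1 1 0 c) +
              (if (1 : Fin 2) = 0 then (1:ℝ) else 0) / (1 - π) *
                (u3 n j 1 1 m c - u4 n j 1 1 0 c) +
              u4 n j 1 1 0 c)
        = ∑ m : Fin n → 𝓜,
            ((if (1 : Fin 2) = 1 then (1:ℝ) else 0) / π *
              (Pr p (fun ω => A ω = 1 ∧ N ω = n ∧ C ω = c ∧ ∀ l : Fin n, M ω l = m l) *
                u2 n j 1 0 (m j) c -
               Pr p (fun ω => A ω = 1 ∧ N ω = n ∧ C ω = c ∧ ∀ l : Fin n, M ω l = m l) *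
                u4 n j 1 1 0 c) +
             (if (1 : Fin 2) = 0 then (1:ℝ) else 0) / (1 - π) *
              (Pr p (fun ω => A ω = 1 ∧ N ω = n ∧ C ω = c ∧ ∀ l : Fin n, M ω l = m l) *
                u3 n j 1 1 m c -
               Pr p (fun ω => A ω = 1 ∧ N ω = n ∧ C ω = c ∧ ∀ l : Fin n, M ω l = m l) *
                u4 n j 1 1 0 c) +
             Pr p (fun ω => A ω = 1 ∧ N ω = n ∧ C ω = c ∧ ∀ l : Fin n, M ω l = m l) *
              u4 n j 1 1 0 c) := Finset.sum_congr rfl fun m _ => by ring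
      _ = (if (1 : Fin 2) = 1 then (1:ℝ) else 0) / π *
            ((∑ m : Fin n → 𝓜,
              Pr p (fun ω => A ω = 1 ∧ N ω = n ∧ C ω = c ∧ ∀ l : Fin n, M ω l = m l) *
                u2 n j 1 0 (m j) c) -
             ∑ m : Fin n → 𝓜,
              Pr p (fun ω => A ω = 1 ∧ N ω = n ∧ C ω = c ∧ ∀ l : Fin n, M ω l = m l) *
                u4 n j 1 1 0 c) +
          (if (1 : Fin 2) = 0 then (1:ℝ) else 0) / (1 - π) *
            ((∑ m : Fin n → 𝓜,
              Pr p (fun ω => A ω = 1 ∧ N ω = n ∧ C ω = c ∧ ∀ l : Fin n, M ω l = m l) *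
                u3 n j 1 1 m c) -
             ∑ m : Fin n → 𝓜,
              Pr p (fun ω => A ω = 1 ∧ N ω = n ∧ C ω = c ∧ ∀ l : Fin n, M ω l = m l) *
                u4 n j 1 1 0 c) +
          ∑ m : Fin n → 𝓜,
            Pr p (fun ω => A ω = 1 ∧ N ω = n ∧ C ω = c ∧ ∀ l : Fin n, M ω l = m l) *
              u4 n j 1 1 0 c := by
          rw [Finset.sum_add_distrib, Finset.sum_add_distrib, ← Finset.mul_sum,
            ← Finset.mul_sum, Finset.sum_sub_distrib, Finset.sum_sub_distrib]
      _ = ∑ m : Fin n → 𝓜,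
            Pr p (fun ω => A ω = 1 ∧ N ω = n ∧ C ω = c ∧ ∀ l : Fin n, M ω l = m l) *
              u4 n j 1 1 0 c := by
          rw [h2, sub_self, mul_zero, zero_add,
            if_neg (by decide : ¬ ((1 : Fin 2) = 0)), zero_div, zero_mul, zero_add]
  · have ha0 : a = 0 := by omega
    subst ha0
    have h3 : (∑ m : Fin n → 𝓜,
        Pr p (fun ω => A ω = 0 ∧ N ω = n ∧ C ω = c ∧ ∀ l : Fin n, M ω l = m l) *
          u3 n j 1 1 m c)
        = ∑ m : Fin n → 𝓜,
            Pr p (fun ω => A ω = 0 ∧ N ω = n ∧ C ω = c ∧ ∀ l : Fin n, M ω l = m l) *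
              u4 n j 1 1 0 c := by
      rw [J2 p hp N C A M η κj κmj hκmj u3 hu3 u4 hu4 n c j,
        base_partition N C A M 0 n c, Finset.sum_mul]
    calc ∑ m : Fin n → 𝓜,
          Pr p (fun ω => A ω = 0 ∧ N ω = n ∧ C ω = c ∧ ∀ l : Fin n, M ω l = m l) *
            ((if (0 : Fin 2) = 1 then (1:ℝ) else 0) / π *
                (u2 n j 1 0 (m j) c - u4 n j 1 1 0 c) +
              (if (0 : Fin 2) = 0 then (1:ℝ) else 0) / (1 - π) *
                (u3 n j 1 1 m c - u4 n j 1 1 0 c) +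
              u4 n j 1 1 0 c)
        = ∑ m : Fin n → 𝓜,
            ((if (0 : Fin 2) = 1 then (1:ℝ) else 0) / π *
              (Pr p (fun ω => A ω = 0 ∧ N ω = n ∧ C ω = c ∧ ∀ l : Fin n, M ω l = m l) *
                u2 n j 1 0 (m j) c -
               Pr p (fun ω => A ω = 0 ∧ N ω = n ∧ C ω = c ∧ ∀ l : Fin n, M ω l = m l) *
                u4 n j 1 1 0 c) +
             (if (0 : Fin 2) = 0 then (1:ℝ) else 0) / (1 - π) *
              (Pr p (fun ω => A ω = 0 ∧ N ω = n ∧ C ω = c ∧ ∀ l : Fin n, M ω l = m l) *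
                u3 n j 1 1 m c -
               Pr p (fun ω => A ω = 0 ∧ N ω = n ∧ C ω = c ∧ ∀ l : Fin n, M ω l = m l) *
                u4 n j 1 1 0 c) +
             Pr p (fun ω => A ω = 0 ∧ N ω = n ∧ C ω = c ∧ ∀ l : Fin n, M ω l = m l) *
              u4 n j 1 1 0 c) := Finset.sum_congr rfl fun m _ => by ring
      _ = (if (0 : Fin 2) = 1 then (1:ℝ) else 0) / π *
            ((∑ m : Fin n → 𝓜,
              Pr p (fun ω => A ω = 0 ∧ N ω = n ∧ C ω = c ∧ ∀ l : Fin n, M ω l = m l) *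
                u2 n j 1 0 (m j) c) -
             ∑ m : Fin n → 𝓜,
              Pr p (fun ω => A ω = 0 ∧ N ω = n ∧ C ω = c ∧ ∀ l : Fin n, M ω l = m l) *
                u4 n j 1 1 0 c) +
          (if (0 : Fin 2) = 0 then (1:ℝ) else 0) / (1 - π) *
            ((∑ m : Fin n → 𝓜,
              Pr p (fun ω => A ω = 0 ∧ N ω = n ∧ C ω = c ∧ ∀ l : Fin n, M ω l = m l) *
                u3 n j 1 1 m c) -
             ∑ m : Fin n → 𝓜,
              Pr p (fun ω => A ω = 0 ∧ N ω = n ∧ C ω = c ∧ ∀ l : Fin n, M ω l = m l) *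
                u4 n j 1 1 0 c) +
          ∑ m : Fin n → 𝓜,
            Pr p (fun ω => A ω = 0 ∧ N ω = n ∧ C ω = c ∧ ∀ l : Fin n, M ω l = m l) *
              u4 n j 1 1 0 c := by
          rw [Finset.sum_add_distrib, Finset.sum_add_distrib, ← Finset.mul_sum,
            ← Finset.mul_sum, Finset.sum_sub_distrib, Finset.sum_sub_distrib]
      _ = ∑ m : Fin n → 𝓜,
            Pr p (fun ω => A ω = 0 ∧ N ω = n ∧ C ω = c ∧ ∀ l : Fin n, M ω l = m l) *
              u4 n j 1 1 0 c := by
          rw [h3, sub_self, mul_zero, add_zero,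
            if_neg (by decide : ¬ ((0 : Fin 2) = 1)), zero_div, zero_mul, zero_add]
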